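/- Let θ ∈ (0, π/2), let S ∈ Π_θ^{Ber,P} relative to K, and let T be a bounded linear operator on H. Then for each choice of sign ±: ber(ST ± TS) ≤ 2 sin(θ) · ( ‖T*T + TT*‖_ber )^{1/2} · ( (ber(S))² − (1/(2 sin²θ))·( (ber(Im(S)))² − (ber(Re(S)))² ) )^{1/2}. -/

import Mathlib

open scoped InnerProductSpace
open ContinuousLinearMap

noncomputable section

variable {H : Type*} [NormedAddCommGroup H] [InnerProductSpace ℂ H] [CompleteSpace H]

/-- The Berezin number of `A` relative to a set `K` of unit vectors:
`ber(A) = sup_{x ∈ K} |⟨A x, x⟩|` (with the paper's inner product `⟨A x, x⟩ = ⟪x, A x⟫_ℂ`). -/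
def berNum (K : Set H) (A : H →L[ℂ] H) : ℝ :=
  ⨆ x : K, ‖⟪(x : H), A x⟫_ℂ‖

/-- The Berezin norm of `A` relative to `K`: `‖A‖_ber = sup_{x, y ∈ K} |⟨A x, y⟩|`. -/
def berNorm (K : Set H) (A : H →L[ℂ] H) : ℝ :=
  ⨆ x : K, ⨆ y : K, ‖⟪(y : H), A (x : H)⟫_ℂ‖

/-- The real part `Re(A) = (A + A*)/2` of an operator. -/
def reOp (A : H →L[ℂ] H) : H →L[ℂ] H := (2 : ℂ)⁻¹ • (A + adjoint A)

/-- The imaginary part `Im(A) = (A - A*)/(2i)` of an operator. -/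
def imOp (A : H →L[ℂ] H) : H →L[ℂ] H := (2 * Complex.I)⁻¹ • (A - adjoint A)

/-- `A` is Berezin sectorial with semi-angle `θ` relative to `K`:
every Berezin symbol value `⟨A x, x⟩`, `x ∈ K`, lies in the sector `S_θ`. -/
def BerSectorial (K : Set H) (θ : ℝ) (A : H →L[ℂ] H) : Prop :=
  ∀ x ∈ K, 0 ≤ (⟪x, A x⟫_ℂ).re ∧ |(⟪x, A x⟫_ℂ).im| ≤ Real.tan θ * (⟪x, A x⟫_ℂ).re

/-- `A ∈ Π_θ^{Ber,P}`: Berezin sectorial and both `Re(A)` and `Im(A)` satisfy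
the Berezin number power inequality. -/
def BerSectorialP (K : Set H) (θ : ℝ) (A : H →L[ℂ] H) : Prop :=
  BerSectorial K θ A ∧
    ∀ n : ℕ, 0 < n →
      berNum K (reOp A ^ n) ≤ berNum K (reOp A) ^ n ∧
      berNum K (imOp A ^ n) ≤ berNum K (imOp A) ^ n

omit [CompleteSpace H] in
lemma abs_inner_le_opNorm (K : Set H) (hKunit : ∀ x ∈ K, ‖x‖ = 1) (A : H →L[ℂ] H)
    {x y : H} (hx : x ∈ K) (hy : y ∈ K) : ‖⟪y, A x⟫_ℂ‖ ≤ ‖A‖ := by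
  calc ‖⟪y, A x⟫_ℂ‖ = ‖⟪y, A x⟫_ℂ‖ := rfl
    _ ≤ ‖y‖ * ‖A x‖ := norm_inner_le_norm _ _
    _ ≤ ‖y‖ * (‖A‖ * ‖x‖) := by
        gcongr; exact A.le_opNorm x
    _ = ‖A‖ := by rw [hKunit x hx, hKunit y hy]; ring

lemma bddAbove_ber (K : Set H) (hKunit : ∀ x ∈ K, ‖x‖ = 1) (A : H →L[ℂ] H) :
    BddAbove (Set.range fun x : K => ‖⟪(x : H), A x⟫_ℂ‖) := by
  refine ⟨‖A‖, ?_⟩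
  rintro _ ⟨x, rfl⟩
  exact abs_inner_le_opNorm K hKunit A x.2 x.2

lemma le_berNum (K : Set H) (hKunit : ∀ x ∈ K, ‖x‖ = 1) (A : H →L[ℂ] H)
    {x : H} (hx : x ∈ K) : ‖⟪x, A x⟫_ℂ‖ ≤ berNum K A :=
  le_ciSup (bddAbove_ber K hKunit A) ⟨x, hx⟩

omit [CompleteSpace H] in
lemma berNum_le (K : Set H) (hK : K.Nonempty) (A : H →L[ℂ] H) {c : ℝ}
    (h : ∀ x ∈ K, ‖⟪x, A x⟫_ℂ‖ ≤ c) : berNum K A ≤ c := by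
  have := hK.to_subtype
  exact ciSup_le fun x => h x x.2

lemma berNum_nonneg (K : Set H) (hK : K.Nonempty) (hKunit : ∀ x ∈ K, ‖x‖ = 1)
    (A : H →L[ℂ] H) : 0 ≤ berNum K A := by
  obtain ⟨x, hx⟩ := hK
  exact (norm_nonneg _).trans (le_berNum K hKunit A hx)

lemma le_berNorm (K : Set H) (hK : K.Nonempty) (hKunit : ∀ x ∈ K, ‖x‖ = 1)
    (A : H →L[ℂ] H) {x : H} (hx : x ∈ K) :
    ‖⟪x, A x⟫_ℂ‖ ≤ berNorm K A := by
  have := hK.to_subtype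
  have h1 : ‖⟪x, A x⟫_ℂ‖ ≤ ⨆ y : K, ‖⟪(y : H), A x⟫_ℂ‖ := by
    refine le_ciSup (f := fun y : K => ‖⟪(y : H), A x⟫_ℂ‖) ?_ ⟨x, hx⟩
    exact ⟨‖A‖, by rintro _ ⟨y, rfl⟩; exact abs_inner_le_opNorm K hKunit A hx y.2⟩
  refine h1.trans ?_
  refine le_ciSup (f := fun z : K => ⨆ y : K, ‖⟪(y : H), A (z : H)⟫_ℂ‖) ?_ ⟨x, hx⟩
  refine ⟨‖A‖, ?_⟩
  rintro _ ⟨z, rfl⟩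
  exact ciSup_le fun y => abs_inner_le_opNorm K hKunit A z.2 y.2

lemma reOp_selfAdjoint (A : H →L[ℂ] H) : adjoint (reOp A) = reOp A := by
  simp [reOp, ← star_eq_adjoint, star_smul, star_add, add_comm]

lemma imOp_selfAdjoint (A : H →L[ℂ] H) : adjoint (imOp A) = imOp A := by
  rw [imOp, ← star_eq_adjoint, star_smul, star_sub, star_eq_adjoint, star_eq_adjoint,
    adjoint_adjoint]
  have : star (2 * Complex.I)⁻¹ = -(2 * Complex.I)⁻¹ := by
    simp [Complex.star_def, mul_inv]
  rw [this, neg_smul, ← smul_neg, neg_sub]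

lemma sq_norm_apply_le (K : Set H) (hKunit : ∀ x ∈ K, ‖x‖ = 1)
    (R : H →L[ℂ] H) (hR : adjoint R = R) {x : H} (hx : x ∈ K) :
    ‖R x‖ ^ 2 ≤ berNum K (R ^ 2) := by
  have h1 : ⟪x, (R ^ 2) x⟫_ℂ = ⟪R x, R x⟫_ℂ := by
    have h2 := adjoint_inner_right R x (R x)
    rw [hR] at h2
    rw [pow_two, ContinuousLinearMap.mul_apply, ← h2]
  have h3 : ‖⟪x, (R ^ 2) x⟫_ℂ‖ = ‖R x‖ ^ 2 := by
    rw [h1, inner_self_eq_norm_sq_to_K]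
    simp
  rw [← h3]
  exact le_berNum K hKunit _ hx

lemma inner_imOp (S : H →L[ℂ] H) (x : H) :
    ⟪x, imOp S x⟫_ℂ = ((⟪x, S x⟫_ℂ).im : ℂ) := by
  have hadj : ⟪x, (adjoint S) x⟫_ℂ = (starRingEnd ℂ) ⟪x, S x⟫_ℂ := by
    rw [adjoint_inner_right, ← inner_conj_symm]
  rw [imOp]
  simp only [ContinuousLinearMap.smul_apply, ContinuousLinearMap.sub_apply,
    inner_smul_right, inner_sub_right, hadj]
  rw [Complex.sub_conj]
  have hI : (2 * Complex.I) ≠ 0 := by simp [Complex.I_ne_zero]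
  field_simp
  simp

lemma inner_reOp (S : H →L[ℂ] H) (x : H) :
    ⟪x, reOp S x⟫_ℂ = ((⟪x, S x⟫_ℂ).re : ℂ) := by
  have hadj : ⟪x, (adjoint S) x⟫_ℂ = (starRingEnd ℂ) ⟪x, S x⟫_ℂ := by
    rw [adjoint_inner_right, ← inner_conj_symm]
  rw [reOp]
  simp only [ContinuousLinearMap.smul_apply, ContinuousLinearMap.add_apply,
    inner_smul_right, inner_add_right, hadj]
  rw [Complex.add_conj]
  field_simp
  simp

set_option maxHeartbeats 1000000 in
/-- If `S ∈ Π_θ^{Ber,P}` with `θ ∈ (0, π/2)` and `T` is a bounded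
operator, then for each sign `ε = ±1`,
`ber(ST ± TS) ≤ 2 sin θ · ‖T*T + TT*‖_ber^{1/2}
  · (ber(S)² − (1/(2 sin²θ))(ber(Im S)² − ber(Re S)²))^{1/2}`. -/
theorem berezin_sectorialP_commutator_bound
    (K : Set H) (hK : K.Nonempty) (hKunit : ∀ x ∈ K, ‖x‖ = 1)
    (θ : ℝ) (hθ : θ ∈ Set.Ioo 0 (Real.pi / 2))
    (S T : H →L[ℂ] H) (hS : BerSectorialP K θ S)
    (ε : ℝ) (hε : ε = 1 ∨ ε = -1) :
    berNum K (S * T + (ε : ℂ) • (T * S)) ≤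
      2 * Real.sin θ *
        Real.sqrt (berNorm K (adjoint T * T + T * adjoint T)) *
        Real.sqrt ((berNum K S) ^ 2 - (2 * Real.sin θ ^ 2)⁻¹ *
          ((berNum K (imOp S)) ^ 2 - (berNum K (reOp S)) ^ 2)) := by
  obtain ⟨hθ0, hθ2⟩ := hθ
  have hπ := Real.pi_pos
  have hsin : 0 < Real.sin θ := Real.sin_pos_of_pos_of_lt_pi hθ0 (by linarith)
  have hcos : 0 < Real.cos θ := Real.cos_pos_of_mem_Ioo ⟨by linarith, hθ2⟩
  set R := reOp S with hRdef
  set J := imOp S with hJdef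
  set r := berNum K R with hrdef
  set j := berNum K J with hjdef
  set s := berNum K S with hsdef
  set a := berNorm K (adjoint T * T + T * adjoint T) with hadef
  have hr0 : 0 ≤ r := berNum_nonneg K hK hKunit R
  have hj0 : 0 ≤ j := berNum_nonneg K hK hKunit J
  have hs0 : 0 ≤ s := berNum_nonneg K hK hKunit S
  -- j ≤ sin θ * s
  have hjs : j ≤ Real.sin θ * s := by
    refine berNum_le K hK J fun x hx => ?_
    set z := ⟪x, S x⟫_ℂ with hzdef
    obtain ⟨hre, him⟩ := hS.1 x hx
    have h1 : ‖⟪x, J x⟫_ℂ‖ = |z.im| := by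
      rw [hJdef, inner_imOp]
      rw [Complex.norm_real, Real.norm_eq_abs]
    have h3 : |z.im| * Real.cos θ ≤ Real.sin θ * z.re := by
      rw [Real.tan_eq_sin_div_cos, div_mul_eq_mul_div, le_div_iff₀ hcos] at him
      linarith
    have habs2 : ‖z‖ ^ 2 = z.re ^ 2 + z.im ^ 2 := by
      rw [Complex.sq_norm, Complex.normSq_apply]; ring
    have h4 : z.im ^ 2 ≤ (Real.sin θ) ^ 2 * ‖z‖ ^ 2 := by
      nlinarith [mul_self_le_mul_self (by positivity) h3, Real.sin_sq_add_cos_sq θ,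
        sq_abs z.im, sq_nonneg z.im]
    have h5 : |z.im| ≤ Real.sin θ * ‖z‖ := by
      calc |z.im| = Real.sqrt (z.im ^ 2) := (Real.sqrt_sq_eq_abs _).symm
        _ ≤ Real.sqrt ((Real.sin θ) ^ 2 * ‖z‖ ^ 2) := Real.sqrt_le_sqrt h4
        _ = Real.sin θ * ‖z‖ := by
            rw [← mul_pow, Real.sqrt_sq (by positivity)]
    rw [h1]
    refine h5.trans ?_
    have := le_berNum K hKunit S hx
    rw [← hzdef] at this
    exact mul_le_mul_of_nonneg_left this hsin.le
  -- the bracket B is controlled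
  set B := s ^ 2 - (2 * Real.sin θ ^ 2)⁻¹ * (j ^ 2 - r ^ 2) with hBdef
  have hsin2 : (0:ℝ) < Real.sin θ ^ 2 := by positivity
  have hj2 : j ^ 2 ≤ Real.sin θ ^ 2 * s ^ 2 := by nlinarith [mul_self_le_mul_self hj0 hjs]
  have h4B : 2 * r ^ 2 + 2 * j ^ 2 ≤ 4 * Real.sin θ ^ 2 * B := by
    have hexp : 4 * Real.sin θ ^ 2 * B = 4 * Real.sin θ ^ 2 * s ^ 2 - 2 * (j ^ 2 - r ^ 2) := by
      rw [hBdef]; field_simp; ring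
    nlinarith
  have hB0 : 0 ≤ B := by nlinarith [sq_nonneg r, sq_nonneg j]
  -- main pointwise estimate
  refine berNum_le K hK _ fun x hx => ?_
  set p := ‖T x‖ ^ 2 + ‖adjoint T x‖ ^ 2 with hpdef
  set q := ‖S x‖ ^ 2 + ‖adjoint S x‖ ^ 2 with hqdef
  have hp0 : 0 ≤ p := by positivity
  have hq0 : 0 ≤ q := by positivity
  -- step 1 : |⟪x, Φ x⟫| ≤ √p √q
  have e1 : ⟪(x:H), S (T x)⟫_ℂ = ⟪adjoint S x, T x⟫_ℂ := (adjoint_inner_left S (T x) x).symm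
  have e2 : ⟪(x:H), T (S x)⟫_ℂ = ⟪adjoint T x, S x⟫_ℂ := (adjoint_inner_left T (S x) x).symm
  have hΦ : ⟪x, (S * T + (ε : ℂ) • (T * S)) x⟫_ℂ =
      ⟪adjoint S x, T x⟫_ℂ + (ε : ℂ) * ⟪adjoint T x, S x⟫_ℂ := by
    simp only [ContinuousLinearMap.add_apply, ContinuousLinearMap.smul_apply,
      ContinuousLinearMap.mul_apply, inner_add_right, inner_smul_right, e1, e2]
  have hεabs : ‖(ε : ℂ)‖ = 1 := by
    rcases hε with h | h <;> simp [h]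
  have hL : ‖⟪x, (S * T + (ε : ℂ) • (T * S)) x⟫_ℂ‖ ≤
      ‖adjoint S x‖ * ‖T x‖ + ‖adjoint T x‖ * ‖S x‖ := by
    rw [hΦ]
    calc ‖⟪adjoint S x, T x⟫_ℂ + (ε : ℂ) * ⟪adjoint T x, S x⟫_ℂ‖
        ≤ ‖⟪adjoint S x, T x⟫_ℂ‖ + ‖(ε : ℂ) * ⟪adjoint T x, S x⟫_ℂ‖ :=
          norm_add_le _ _
      _ = ‖⟪adjoint S x, T x⟫_ℂ‖ + ‖⟪adjoint T x, S x⟫_ℂ‖ := by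
          rw [norm_mul, hεabs, one_mul]
      _ ≤ ‖adjoint S x‖ * ‖T x‖ + ‖adjoint T x‖ * ‖S x‖ := by
          gcongr <;> · exact norm_inner_le_norm _ _
  have hCS : ‖adjoint S x‖ * ‖T x‖ + ‖adjoint T x‖ * ‖S x‖ ≤ Real.sqrt p * Real.sqrt q := by
    have hLnn : 0 ≤ ‖adjoint S x‖ * ‖T x‖ + ‖adjoint T x‖ * ‖S x‖ := by positivity
    have hsq : (‖adjoint S x‖ * ‖T x‖ + ‖adjoint T x‖ * ‖S x‖) ^ 2 ≤ p * q := by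
      rw [hpdef, hqdef]
      nlinarith [sq_nonneg (‖T x‖ * ‖S x‖ - ‖adjoint T x‖ * ‖adjoint S x‖),
        norm_nonneg (T x), norm_nonneg (S x), norm_nonneg (adjoint T x), norm_nonneg (adjoint S x)]
    calc ‖adjoint S x‖ * ‖T x‖ + ‖adjoint T x‖ * ‖S x‖
        = Real.sqrt ((‖adjoint S x‖ * ‖T x‖ + ‖adjoint T x‖ * ‖S x‖) ^ 2) :=
          (Real.sqrt_sq hLnn).symm
      _ ≤ Real.sqrt (p * q) := Real.sqrt_le_sqrt hsq
      _ = Real.sqrt p * Real.sqrt q := Real.sqrt_mul hp0 q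
  -- step 2 : p ≤ a
  have hpa : p ≤ a := by
    have h1 : ⟪x, (adjoint T * T + T * adjoint T) x⟫_ℂ = ((p : ℝ) : ℂ) := by
      have e3 : ⟪x, (adjoint T) (T x)⟫_ℂ = ⟪T x, T x⟫_ℂ := adjoint_inner_right T x (T x)
      have e4 : ⟪x, T ((adjoint T) x)⟫_ℂ = ⟪adjoint T x, adjoint T x⟫_ℂ :=
        (adjoint_inner_left T (adjoint T x) x).symm
      simp only [ContinuousLinearMap.add_apply, ContinuousLinearMap.mul_apply,
        inner_add_right, e3, e4, inner_self_eq_norm_sq_to_K, hpdef]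
      push_cast
      norm_num
    have h2 := le_berNorm K hK hKunit (adjoint T * T + T * adjoint T) hx
    rw [h1] at h2
    rw [Complex.norm_real, Real.norm_eq_abs, abs_of_nonneg hp0] at h2
    exact h2
  -- step 3 : q = 2‖Rx‖² + 2‖Jx‖² ≤ 2r² + 2j²
  have hq : q ≤ 2 * r ^ 2 + 2 * j ^ 2 := by
    have hpar := parallelogram_law_with_norm ℂ (S x) (adjoint S x)
    have hn2 : ‖((2:ℂ))⁻¹‖ = (2:ℝ)⁻¹ := by
      rw [norm_inv]; norm_num
    have hn2I : ‖((2 * Complex.I))⁻¹‖ = (2:ℝ)⁻¹ := by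
      rw [norm_inv, norm_mul, Complex.norm_I, mul_one]; norm_num
    have hRx : ‖R x‖ = 2⁻¹ * ‖S x + adjoint S x‖ := by
      rw [hRdef, reOp, ContinuousLinearMap.smul_apply, norm_smul,
        ContinuousLinearMap.add_apply, hn2]
    have hJx : ‖J x‖ = 2⁻¹ * ‖S x - adjoint S x‖ := by
      rw [hJdef, imOp, ContinuousLinearMap.smul_apply, norm_smul,
        ContinuousLinearMap.sub_apply, hn2I]
    have hqeq : q = 2 * ‖R x‖ ^ 2 + 2 * ‖J x‖ ^ 2 := by
      rw [hqdef, hRx, hJx]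
      linear_combination (-1/2 : ℝ) * hpar
    have hR2 : ‖R x‖ ^ 2 ≤ r ^ 2 := by
      refine (sq_norm_apply_le K hKunit R (by rw [hRdef]; exact reOp_selfAdjoint S) hx).trans ?_
      exact (hS.2 2 (by norm_num)).1
    have hJ2 : ‖J x‖ ^ 2 ≤ j ^ 2 := by
      refine (sq_norm_apply_le K hKunit J (by rw [hJdef]; exact imOp_selfAdjoint S) hx).trans ?_
      exact (hS.2 2 (by norm_num)).2
    rw [hqeq]; linarith
  -- assemble
  have ha0 : 0 ≤ a := hp0.trans hpa
  calc ‖⟪x, (S * T + (ε : ℂ) • (T * S)) x⟫_ℂ‖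
      ≤ Real.sqrt p * Real.sqrt q := hL.trans hCS
    _ ≤ Real.sqrt a * Real.sqrt (4 * Real.sin θ ^ 2 * B) :=
        mul_le_mul (Real.sqrt_le_sqrt hpa) (Real.sqrt_le_sqrt (hq.trans h4B))
          (Real.sqrt_nonneg _) (Real.sqrt_nonneg _)
    _ = Real.sqrt a * (2 * Real.sin θ * Real.sqrt B) := by
        rw [show (4 : ℝ) * Real.sin θ ^ 2 * B = (2 * Real.sin θ) ^ 2 * B by ring,
          Real.sqrt_mul (by positivity), Real.sqrt_sq (by positivity)]
    _ = 2 * Real.sin θ * Real.sqrt a * Real.sqrt B := by ring
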